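/- arXiv:1811.02622 — 7 statements merged into one kernel-verified Lean document; each statement's English description precedes it below -/
import Mathlib

section
/- Conversely, any feasible cluster-level point (u_t, p_t, r⁺_t, r⁻_t) with u_t ∈ {0,…,G}, p_t, r⁺_t, r⁻_t ≥ 0, p_t + r⁺_t ≤ (P̄ − P_) u_t, and p_t − r⁻_t ≥ 0 can be disaggregated into individual-unit variables: there exist ũ_{g,t} ∈ {0,1} (ordered: ũ_{g+1,t} ≤ ũ_{g,t}) and p̃_{g,t}, r̃⁺_{g,t}, r̃⁻_{g,t} ≥ 0 with p̃_{g,t} + r̃⁺_{g,t} ≤ (P̄ − P_) ũ_{g,t}, p̃_{g,t} ≥ r̃⁻_{g,t}, and sums equal to u_t, p_t, r⁺_t, r⁻_t respectively. -/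
/-! Commit the first `u` units and give each of them the equal share `1 / u` of the production
and of both reserves. The per-unit capacity constraint is the cluster one divided by `u`, and
when `u = 0` the cluster capacity constraint forces production and reserves to vanish. -/

open Finset

theorem Fin.sum_ite_val_lt {M : Type*} [AddCommMonoid M] (n m : ℕ) (c : M) :
    ∑ i : Fin n, (if (i : ℕ) < m then c else 0) = min n m • c := by
  rw [sum_ite, sum_const_zero, add_zero, Finset.sum_const, Fin.card_filter_val_lt]

section EvenSplit

variable {K : Type*} [Field K] {G u : ℕ}

def firstUnits (G u : ℕ) (g : Fin G) : K := if (g : ℕ) < u then 1 else 0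

def evenSplit (G u : ℕ) (x : K) (g : Fin G) : K := if (g : ℕ) < u then x / u else 0

theorem firstUnits_eq_zero_or_one (g : Fin G) :
    firstUnits (K := K) G u g = 0 ∨ firstUnits (K := K) G u g = 1 := by
  unfold firstUnits
  split_ifs <;> simp

theorem sum_firstUnits (hu : u ≤ G) : ∑ g, firstUnits (K := K) G u g = u := by
  simp only [firstUnits, Fin.sum_ite_val_lt, min_eq_right hu, nsmul_one]

theorem evenSplit_add (x y : K) (g : Fin G) :
    evenSplit G u (x + y) g = evenSplit G u x g + evenSplit G u y g := by
  unfold evenSplit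
  split_ifs
  exacts [add_div x y u, (add_zero 0).symm]

variable [LinearOrder K] [IsStrictOrderedRing K]

theorem firstUnits_antitone : Antitone (firstUnits (K := K) G u) := by
  intro g h hgh
  unfold firstUnits
  by_cases hh : (h : ℕ) < u
  · rw [if_pos hh, if_pos (lt_of_le_of_lt (Fin.le_def.mp hgh) hh)]
  · rw [if_neg hh]
    split_ifs
    exacts [zero_le_one, le_rfl]

theorem evenSplit_nonneg {x : K} (hx : 0 ≤ x) (g : Fin G) : 0 ≤ evenSplit G u x g := by
  unfold evenSplit
  split_ifs
  exacts [by positivity, le_rfl]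

theorem evenSplit_mono {x y : K} (hxy : x ≤ y) (g : Fin G) :
    evenSplit G u x g ≤ evenSplit G u y g := by
  unfold evenSplit
  split_ifs
  exacts [div_le_div_of_nonneg_right hxy (Nat.cast_nonneg u), le_rfl]

theorem evenSplit_le_mul_firstUnits {x C : K} (hx : x ≤ C * u) (g : Fin G) :
    evenSplit G u x g ≤ C * firstUnits G u g := by
  unfold evenSplit firstUnits
  split_ifs with hg
  · have hu : (0 : K) < u := Nat.cast_pos.mpr (Nat.zero_lt_of_lt hg)
    rw [mul_one, div_le_iff₀ hu]
    exact hx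
  · rw [mul_zero]

theorem sum_evenSplit (hu : u ≤ G) {x : K} (hx : u = 0 → x = 0) :
    ∑ g, evenSplit G u x g = x := by
  simp only [evenSplit, Fin.sum_ite_val_lt, min_eq_right hu, nsmul_eq_mul]
  exact mul_div_cancel_of_imp' (fun h => hx (Nat.cast_eq_zero.mp h))

end EvenSplit

theorem cluster_point_disaggregates_general (G : ℕ) (Pmax Pmin : ℝ)
    (u : ℕ) (hu : u ≤ G) (p rp rm : ℝ)
    (hp : 0 ≤ p) (hrp : 0 ≤ rp) (hrm : 0 ≤ rm)
    (hcap : p + rp ≤ (Pmax - Pmin) * u)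
    (hmin : rm ≤ p) :
    ∃ ut pt rpt rmt : Fin G → ℝ,
      (∀ g, ut g = 0 ∨ ut g = 1) ∧
      (∀ (g : Fin G) (h : (g : ℕ) + 1 < G), ut ⟨(g : ℕ) + 1, h⟩ ≤ ut g) ∧
      (∀ g, 0 ≤ pt g ∧ 0 ≤ rpt g ∧ 0 ≤ rmt g) ∧
      (∀ g, pt g + rpt g ≤ (Pmax - Pmin) * ut g) ∧
      (∀ g, rmt g ≤ pt g) ∧
      (∑ g, ut g) = u ∧ (∑ g, pt g) = p ∧ (∑ g, rpt g) = rp ∧ (∑ g, rmt g) = rm := by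
  have hidle : u = 0 → p = 0 ∧ rp = 0 ∧ rm = 0 := by
    rintro rfl
    rw [Nat.cast_zero, mul_zero] at hcap
    refine ⟨?_, ?_, ?_⟩ <;> linarith
  refine ⟨firstUnits G u, evenSplit G u p, evenSplit G u rp, evenSplit G u rm,
    firstUnits_eq_zero_or_one, fun g _ => firstUnits_antitone (Nat.le_succ g),
    fun g => ⟨evenSplit_nonneg hp g, evenSplit_nonneg hrp g, evenSplit_nonneg hrm g⟩,
    fun g => evenSplit_add p rp g ▸ evenSplit_le_mul_firstUnits hcap g,
    evenSplit_mono hmin, sum_firstUnits hu, sum_evenSplit hu (fun h => (hidle h).1),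
    sum_evenSplit hu (fun h => (hidle h).2.1), sum_evenSplit hu (fun h => (hidle h).2.2)⟩

/-- Any feasible cluster-level point can be disaggregated into individual ordered 0–1
commitments and nonnegative per-unit production/reserve variables with the same sums. -/
theorem cluster_point_disaggregates (G : ℕ) (Pmax Pmin : ℝ)
    (hPmin : 0 ≤ Pmin) (hP : Pmin < Pmax)
    (u : ℕ) (hu : u ≤ G) (p rp rm : ℝ)
    (hp : 0 ≤ p) (hrp : 0 ≤ rp) (hrm : 0 ≤ rm)
    (hcap : p + rp ≤ (Pmax - Pmin) * u)
    (hmin : rm ≤ p) :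
    ∃ ut pt rpt rmt : Fin G → ℝ,
      (∀ g, ut g = 0 ∨ ut g = 1) ∧
      (∀ (g : Fin G) (h : (g : ℕ) + 1 < G), ut ⟨(g : ℕ) + 1, h⟩ ≤ ut g) ∧
      (∀ g, 0 ≤ pt g ∧ 0 ≤ rpt g ∧ 0 ≤ rmt g) ∧
      (∀ g, pt g + rpt g ≤ (Pmax - Pmin) * ut g) ∧
      (∀ g, rmt g ≤ pt g) ∧
      (∑ g, ut g) = u ∧ (∑ g, pt g) = p ∧ (∑ g, rpt g) = rp ∧ (∑ g, rmt g) = rm :=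
  cluster_point_disaggregates_general G Pmax Pmin u hu p rp rm hp hrp hrm hcap hmin
end

section
/- There exist parameter values (G ≥ 2, RU > 0, C > RU) and a feasible point (u_{t−1}, u_t, p_{t−1}, p_t) of the classic clustered ramping constraint p_t − p_{t−1} ≤ RU·u_t with u_{t−1} = u_t = G and p_{t−1}, p_t ∈ [0, G·C], such that no individual disaggregation exists: there are no p̃_{g,t−1}, p̃_{g,t} ∈ [0, C] with Σ_g p̃_{g,t−1} = p_{t−1}, Σ_g p̃_{g,t} = p_t, and p̃_{g,t} − p̃_{g,t−1} ≤ RU for all g. -/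
/-- The classic clustered ramping constraint is a strict relaxation: there are parameters, a
fixed previous-period individual profile, and an aggregate target `p_t` satisfying the
clustered ramping constraint `p_t − p_{t−1} ≤ RU·G` and capacity bounds, for which no
individual disaggregation respecting per-unit ramp limits exists. -/
theorem classic_clustered_ramping_strict_relaxation :
    ∃ (G : ℕ) (RU C : ℝ) (pPrev : Fin G → ℝ) (pt : ℝ),
      2 ≤ G ∧ 0 < RU ∧ RU < C ∧
      (∀ g, 0 ≤ pPrev g ∧ pPrev g ≤ C) ∧
      0 ≤ pt ∧ pt ≤ G * C ∧
      pt - (∑ g, pPrev g) ≤ RU * G ∧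
      ¬ ∃ q : Fin G → ℝ,
        (∀ g, 0 ≤ q g ∧ q g ≤ C) ∧ (∑ g, q g) = pt ∧ ∀ g, q g - pPrev g ≤ RU := by
  refine ⟨2, 1, 3, ![3, 0], 5, le_refl _, one_pos, by norm_num, ?_, by norm_num, ?_, ?_, ?_⟩
  · intro g
    fin_cases g <;> norm_num
  · norm_num
  · rw [Fin.sum_univ_two]; norm_num
  · rintro ⟨q, hq, hsum, hramp⟩
    rw [Fin.sum_univ_two] at hsum
    have h0 := (hq 0).2
    have h1 := hramp 1
    simp [Matrix.cons_val_one] at h1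
    linarith
end

section
/- For TU ≥ 2: if ũ_{g,t} ∈ {0,1} satisfy startup/shutdown logic with at most one switch in consecutive periods and p̃_{g,t} + r̃⁺_{g,t} ≤ (SU − P_)ũ_{g,t} + (P̄ − SU)ũ_{g,t−1} and p̃_{g,t} + r̃⁺_{g,t} ≤ (SD − P_)ũ_{g,t} + (P̄ − SD)ũ_{g,t+1} hold for all g, then the aggregates satisfy the clustered constraint p_t + r⁺_t ≤ (P̄ − P_)u_t − (P̄ − SU)y_t − (P̄ − SD)z_{t+1}, where y_t = Σ_g max(ũ_{g,t} − ũ_{g,t−1}, 0) and z_t = Σ_g max(ũ_{g,t−1} − ũ_{g,t}, 0). -/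
/-- For `TU ≥ 2` (encoded by at most one commitment switch over consecutive periods), the
individual startup/shutdown capacity constraints (20)–(21) imply the clustered capacity
constraint (4), where startups/shutdowns are counted via positive parts. -/
theorem individual_startup_shutdown_implies_clustered (G : ℕ)
    (Pmax Pmin SU SD : ℝ)
    (h1 : Pmin ≤ SU) (h2 : SU ≤ Pmax) (h3 : Pmin ≤ SD) (h4 : SD ≤ Pmax)
    (a b c : Fin G → ℝ)  -- ũ_{g,t-1}, ũ_{g,t}, ũ_{g,t+1}
    (p rp : Fin G → ℝ)
    (hbin : ∀ g, (a g = 0 ∨ a g = 1) ∧ (b g = 0 ∨ b g = 1) ∧ (c g = 0 ∨ c g = 1))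
    (hnn : ∀ g, 0 ≤ p g ∧ 0 ≤ rp g)
    (hswitch : ∀ g, ¬(a g ≠ b g ∧ b g ≠ c g))
    (h20 : ∀ g, p g + rp g ≤ (SU - Pmin) * b g + (Pmax - SU) * a g)
    (h21 : ∀ g, p g + rp g ≤ (SD - Pmin) * b g + (Pmax - SD) * c g) :
    (∑ g, p g) + (∑ g, rp g) ≤
      (Pmax - Pmin) * (∑ g, b g)
        - (Pmax - SU) * (∑ g, max (b g - a g) 0)
        - (Pmax - SD) * (∑ g, max (b g - c g) 0) := by
  have key : ∀ g, p g + rp g ≤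
      (Pmax - Pmin) * b g - (Pmax - SU) * max (b g - a g) 0
        - (Pmax - SD) * max (b g - c g) 0 := by
    intro g
    obtain ⟨ha, hb, hc⟩ := hbin g
    have hsw := hswitch g
    have h20g := h20 g
    have h21g := h21 g
    have hnng := hnn g
    rcases ha with ha | ha <;> rcases hb with hb | hb <;> rcases hc with hc | hc <;>
      simp [ha, hb, hc] at hsw h20g h21g ⊢ <;>
      norm_num <;> linarith
  calc (∑ g, p g) + (∑ g, rp g) = ∑ g, (p g + rp g) := by
        rw [Finset.sum_add_distrib]
    _ ≤ ∑ g, ((Pmax - Pmin) * b g - (Pmax - SU) * max (b g - a g) 0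
          - (Pmax - SD) * max (b g - c g) 0) :=
        Finset.sum_le_sum fun g _ => key g
    _ = _ := by simp [Finset.sum_sub_distrib, Finset.mul_sum]
end

section
/- For a single unit with TU = 1, the pair of constraints p + r ≤ (P̄−P_)u − (P̄−SD)z' − max(SD−SU,0)y and p + r ≤ (P̄−P_)u − (P̄−SU)y − max(SU−SD,0)z' (with u, y, z' ∈ {0,1}, u ≥ y, u ≥ z', p, r ≥ 0) implies the following bounds: if y = z' = 1 then p + r ≤ min(SU, SD) − P_; if y = 1, z' = 0 then p + r ≤ SU − P_; if y = 0, z' = 1 then p + r ≤ SD − P_; if y = z' = 0, u = 1 then p + r ≤ P̄ − P_. -/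
/-- For a single unit with `TU = 1`, the pair of constraints (5)–(6) encodes the correct
cap in every startup/shutdown case. -/
theorem single_unit_capacity_TUeq1 (Pmax Pmin SU SD : ℝ)
    (h1 : Pmin ≤ SU) (h2 : SU ≤ Pmax) (h3 : Pmin ≤ SD) (h4 : SD ≤ Pmax)
    (u y z' p r : ℝ)
    (hu : u = 0 ∨ u = 1) (hy : y = 0 ∨ y = 1) (hz' : z' = 0 ∨ z' = 1)
    (hyu : y ≤ u) (hz'u : z' ≤ u)
    (hp : 0 ≤ p) (hr : 0 ≤ r)
    (hA : p + r ≤ (Pmax - Pmin) * u - (Pmax - SD) * z' - max (SD - SU) 0 * y)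
    (hB : p + r ≤ (Pmax - Pmin) * u - (Pmax - SU) * y - max (SU - SD) 0 * z') :
    (y = 1 → z' = 1 → p + r ≤ min SU SD - Pmin) ∧
    (y = 1 → z' = 0 → p + r ≤ SU - Pmin) ∧
    (y = 0 → z' = 1 → p + r ≤ SD - Pmin) ∧
    (y = 0 → z' = 0 → u = 1 → p + r ≤ Pmax - Pmin) := by
  rcases le_total SD SU with h | h
  · have e1 : max (SD - SU) 0 = 0 := max_eq_right (by linarith)
    have e2 : max (SU - SD) 0 = SU - SD := max_eq_left (by linarith)
    have e3 : min SU SD = SD := min_eq_right h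
    rw [e1] at hA; rw [e2] at hB; rw [e3]
    refine ⟨fun hy1 hz1 => ?_, fun hy1 hz1 => ?_, fun hy1 hz1 => ?_, fun hy1 hz1 hu1 => ?_⟩ <;>
      subst hy1 <;> subst hz1 <;> [skip; skip; skip; subst hu1] <;>
      rcases hu with hu | hu <;> first | (subst hu; linarith) | linarith
  · have e1 : max (SD - SU) 0 = SD - SU := max_eq_left (by linarith)
    have e2 : max (SU - SD) 0 = 0 := max_eq_right (by linarith)
    have e3 : min SU SD = SU := min_eq_left h
    rw [e1] at hA; rw [e2] at hB; rw [e3]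
    refine ⟨fun hy1 hz1 => ?_, fun hy1 hz1 => ?_, fun hy1 hz1 => ?_, fun hy1 hz1 hu1 => ?_⟩ <;>
      subst hy1 <;> subst hz1 <;> [skip; skip; skip; subst hu1] <;>
      rcases hu with hu | hu <;> first | (subst hu; linarith) | linarith
end

section
/- Disaggregation theorem for commitment trajectories: any integer trajectory (u_t, y_t, z_t)_{t=1}^{T} with u_t ∈ {0,…,G}, y_t, z_t ∈ ℤ≥0, u_t − u_{t−1} = y_t − z_t, Σ_{i=t−TU+1}^{t} y_i ≤ u_t, and Σ_{i=t−TD+1}^{t} z_i ≤ G − u_t can be decomposed into G individual 0–1 trajectories (ũ_{g,t}) each satisfying the single-unit minimum up/down time constraints with y_t = Σ_g (ũ_{g,t}−ũ_{g,t−1})₊ and z_t = Σ_g (ũ_{g,t−1}−ũ_{g,t})₊ and u_t = Σ_g ũ_{g,t}. -/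
/-!
Number the startups of the clustered trajectory `1, 2, 3, …` in time order, and likewise the
shutdowns, and give the `k`-th startup and the `k`-th shutdown to the same unit, cycling through
the `G` units. In terms of the cumulative counts `Y t` of startups and `Z t` of shutdowns, the
minimum up time constraint says `Z t ≤ Y (t - TU)`: the `k`-th shutdown comes at least `TU`
periods after the `k`-th startup. The minimum down time constraint says `Y t ≤ Z (t - TD) + G`:
the `(k + G)`-th startup comes at least `TD` periods after the `k`-th shutdown. Unit `g` sees the
subsequences of startups and shutdowns numbered `≡ -g (mod G)`, and since counting the members
of such a subsequence below a bound is monotone and turns `+ G` into `+ 1`, the unit's own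
cumulative counts satisfy the same two inequalities with `G = 1`, which are exactly the
single-unit constraints.
-/

open Finset

theorem Finset.sum_Icc_sub_pred {M : Type*} [AddCommGroup M] (f : ℕ → M) (t L : ℕ) :
    ∑ i ∈ Icc (t + 1 - L) t, (f i - f (i - 1)) = f t - f (t - L) := by
  induction L with
  | zero => simp
  | succ L ih =>
    rcases le_or_gt L t with hL | hL
    · rw [show t + 1 - (L + 1) = t - L by omega,
        ← insert_Icc_add_one_left_eq_Icc (by omega : t - L ≤ t), sum_insert (by simp),
        show t - L + 1 = t + 1 - L by omega, ih, show t - L - 1 = t - (L + 1) by omega]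
      abel
    · rwa [show t + 1 - (L + 1) = t + 1 - L by omega, show t - (L + 1) = t - L by omega]

/-- `(x + g) / G` is the number of `k ∈ (0, x]` with `G ∣ k + g`. -/
def roundRobinShare (G g : ℕ) (x : ℤ) : ℤ := (x + g) / G

section RoundRobin

variable {G g : ℕ}

theorem roundRobinShare_zero (hg : g < G) : roundRobinShare G g 0 = 0 :=
  Int.ediv_eq_zero_of_lt (by omega) (by omega)

theorem roundRobinShare_mono (hG : 0 < G) (g : ℕ) : Monotone (roundRobinShare G g) :=
  fun _ _ h ↦ Int.ediv_le_ediv (by omega) (by omega)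

theorem roundRobinShare_add_self (hG : 0 < G) (g : ℕ) (x : ℤ) :
    roundRobinShare G g (x + G) = roundRobinShare G g x + 1 := by
  rw [roundRobinShare, roundRobinShare, add_right_comm, Int.add_ediv_of_dvd_right dvd_rfl,
    Int.ediv_self (by omega)]

theorem sum_roundRobinShare_add_one (hG : 0 < G) (x : ℤ) :
    ∑ g : Fin G, roundRobinShare G g (x + 1) = ∑ g : Fin G, roundRobinShare G g x + 1 := by
  have hshift (g : ℕ) : roundRobinShare G g (x + 1) = roundRobinShare G (g + 1) x := by
    simp only [roundRobinShare, Nat.cast_add, Nat.cast_one, add_assoc, add_comm (1 : ℤ)]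
  have hwrap : roundRobinShare G G x = roundRobinShare G 0 x + 1 := by
    simpa [roundRobinShare] using roundRobinShare_add_self hG 0 x
  have h₁ := Fin.sum_univ_eq_sum_range (fun g ↦ roundRobinShare G (g + 1) x) G
  have h₂ := Fin.sum_univ_eq_sum_range (fun g ↦ roundRobinShare G g x) G
  beta_reduce at h₁ h₂
  simp only [hshift, h₁, h₂]
  linarith [sum_range_succ' (roundRobinShare G · x) G, sum_range_succ (roundRobinShare G · x) G]

theorem sum_roundRobinShare (hG : 0 < G) (x : ℤ) : ∑ g : Fin G, roundRobinShare G g x = x := by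
  induction x using Int.induction_on with
  | zero => exact sum_eq_zero fun g _ ↦ roundRobinShare_zero g.isLt
  | succ n ih => rw [sum_roundRobinShare_add_one hG, ih]
  | pred n ih =>
    have h := sum_roundRobinShare_add_one hG (-(n : ℤ) - 1)
    rw [sub_add_cancel, ih] at h
    linarith

theorem sum_roundRobinShare_sub {x x' : ℤ} (h : x ≤ x') (h' : x' ≤ x + G) :
    ∑ g : Fin G, (roundRobinShare G g x' - roundRobinShare G g x) = x' - x := by
  rcases Nat.eq_zero_or_pos G with rfl | hG
  · simp only [univ_eq_empty, sum_empty]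
    omega
  rw [sum_sub_distrib, sum_roundRobinShare hG, sum_roundRobinShare hG]

end RoundRobin

/-- `Y t` and `Z t` count the startups and shutdowns of a cluster of `G` units in periods
`1, …, t`; the last two fields are the minimum up and down time constraints. -/
structure IsCumulativeSchedule (G TU TD : ℕ) (Y Z : ℕ → ℤ) : Prop where
  startups_zero : Y 0 = 0
  shutdowns_zero : Z 0 = 0
  monotone_startups : Monotone Y
  monotone_shutdowns : Monotone Z
  shutdowns_le_startups_sub : ∀ t, Z t ≤ Y (t - TU)
  startups_le_shutdowns_sub_add : ∀ t, Y t ≤ Z (t - TD) + G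

namespace IsCumulativeSchedule

variable {G TU TD : ℕ} {Y Z : ℕ → ℤ}

theorem mono (hS : IsCumulativeSchedule G TU TD Y Z) {TU' TD' : ℕ} (hU : TU' ≤ TU)
    (hD : TD' ≤ TD) : IsCumulativeSchedule G TU' TD' Y Z where
  __ := hS
  shutdowns_le_startups_sub t :=
    (hS.shutdowns_le_startups_sub t).trans (hS.monotone_startups (by omega))
  startups_le_shutdowns_sub_add t := (hS.startups_le_shutdowns_sub_add t).trans
    (add_le_add_left (hS.monotone_shutdowns (by omega)) _)

theorem shutdowns_le_startups (hS : IsCumulativeSchedule G TU TD Y Z) (t : ℕ) : Z t ≤ Y t :=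
  (hS.mono (Nat.zero_le _) (Nat.zero_le _)).shutdowns_le_startups_sub t

theorem startups_le_shutdowns_add (hS : IsCumulativeSchedule G TU TD Y Z) (t : ℕ) :
    Y t ≤ Z t + G :=
  (hS.mono (Nat.zero_le _) (Nat.zero_le _)).startups_le_shutdowns_sub_add t

theorem startups_le_pred_add (hS : IsCumulativeSchedule G TU TD Y Z) (hTD : 1 ≤ TD) (t : ℕ) :
    Y t ≤ Y (t - 1) + G :=
  ((hS.mono le_rfl hTD).startups_le_shutdowns_sub_add t).trans
    (add_le_add_left (hS.shutdowns_le_startups _) _)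

theorem shutdowns_le_pred_add (hS : IsCumulativeSchedule G TU TD Y Z) (hTU : 1 ≤ TU) (t : ℕ) :
    Z t ≤ Z (t - 1) + G :=
  ((hS.mono hTU le_rfl).shutdowns_le_startups_sub t).trans (hS.startups_le_shutdowns_add _)

theorem roundRobinShare (hS : IsCumulativeSchedule G TU TD Y Z) {g : ℕ} (hg : g < G) :
    IsCumulativeSchedule 1 TU TD (roundRobinShare G g ∘ Y) (roundRobinShare G g ∘ Z) where
  startups_zero := by simp [hS.startups_zero, roundRobinShare_zero hg]
  shutdowns_zero := by simp [hS.shutdowns_zero, roundRobinShare_zero hg]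
  monotone_startups := (roundRobinShare_mono (Nat.zero_lt_of_lt hg) g).comp hS.monotone_startups
  monotone_shutdowns :=
    (roundRobinShare_mono (Nat.zero_lt_of_lt hg) g).comp hS.monotone_shutdowns
  shutdowns_le_startups_sub t :=
    roundRobinShare_mono (Nat.zero_lt_of_lt hg) g (hS.shutdowns_le_startups_sub t)
  startups_le_shutdowns_sub_add t := by
    simpa [roundRobinShare_add_self (Nat.zero_lt_of_lt hg)] using
      roundRobinShare_mono (Nat.zero_lt_of_lt hg) g (hS.startups_le_shutdowns_sub_add t)

section SingleUnit

variable {F H : ℕ → ℤ}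

theorem sub_eq_zero_or_one (hS : IsCumulativeSchedule 1 TU TD F H) (t : ℕ) :
    F t - H t = 0 ∨ F t - H t = 1 := by
  have := hS.shutdowns_le_startups t
  have := hS.startups_le_shutdowns_add t
  push_cast at *
  omega

-- With `TU = TD = 1` a unit cannot start up and shut down in the same period.
theorem max_sub_pred_zero (hS : IsCumulativeSchedule 1 1 1 F H) (t : ℕ) :
    max ((F t - H t) - (F (t - 1) - H (t - 1))) 0 = F t - F (t - 1) := by
  have := hS.monotone_startups (Nat.sub_le t 1)
  have := hS.monotone_shutdowns (Nat.sub_le t 1)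
  have := hS.shutdowns_le_startups_sub t
  have := hS.startups_le_shutdowns_sub_add t
  push_cast at *
  omega

theorem max_pred_sub_zero (hS : IsCumulativeSchedule 1 1 1 F H) (t : ℕ) :
    max ((F (t - 1) - H (t - 1)) - (F t - H t)) 0 = H t - H (t - 1) := by
  have := hS.monotone_startups (Nat.sub_le t 1)
  have := hS.monotone_shutdowns (Nat.sub_le t 1)
  have := hS.shutdowns_le_startups_sub t
  have := hS.startups_le_shutdowns_sub_add t
  push_cast at *
  omega

theorem sum_max_sub_pred_zero_le (hS : IsCumulativeSchedule 1 TU TD F H) (hTU : 1 ≤ TU)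
    (hTD : 1 ≤ TD) (t : ℕ) :
    ∑ i ∈ Icc (t + 1 - TU) t, max ((F i - H i) - (F (i - 1) - H (i - 1))) 0 ≤ F t - H t := by
  rw [sum_congr rfl fun i _ ↦ (hS.mono hTU hTD).max_sub_pred_zero i, sum_Icc_sub_pred]
  linarith [hS.shutdowns_le_startups_sub t]

theorem sum_max_pred_sub_zero_le (hS : IsCumulativeSchedule 1 TU TD F H) (hTU : 1 ≤ TU)
    (hTD : 1 ≤ TD) (t : ℕ) :
    ∑ i ∈ Icc (t + 1 - TD) t, max ((F (i - 1) - H (i - 1)) - (F i - H i)) 0 ≤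
      1 - (F t - H t) := by
  rw [sum_congr rfl fun i _ ↦ (hS.mono hTU hTD).max_pred_sub_zero i, sum_Icc_sub_pred]
  have := hS.startups_le_shutdowns_sub_add t
  push_cast at this
  linarith

end SingleUnit

end IsCumulativeSchedule

/-- Frozen after the horizon `T`, so that the schedule constraints hold at every `t`. -/
def cumulativeSum (T : ℕ) (x : ℕ → ℤ) (t : ℕ) : ℤ := ∑ i ∈ Ioc 0 (min t T), x i

section CumulativeSum

variable {T : ℕ} {x : ℕ → ℤ}

@[simp]
theorem cumulativeSum_zero : cumulativeSum T x 0 = 0 := by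
  simp [cumulativeSum]

theorem cumulativeSum_min (t : ℕ) : cumulativeSum T x (min t T) = cumulativeSum T x t := by
  simp [cumulativeSum]

theorem monotone_cumulativeSum (hx : ∀ t, 0 ≤ x t) : Monotone (cumulativeSum T x) :=
  fun _ _ h ↦ sum_le_sum_of_subset_of_nonneg (Ioc_subset_Ioc_right (min_le_min_right T h))
    fun i _ _ ↦ hx i

theorem cumulativeSum_sub_pred {t : ℕ} (ht : 1 ≤ t) (htT : t ≤ T) :
    cumulativeSum T x t - cumulativeSum T x (t - 1) = x t := by
  obtain ⟨s, rfl⟩ := Nat.exists_eq_add_of_le' ht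
  rw [cumulativeSum, cumulativeSum, min_eq_left htT, min_eq_left (by omega), Nat.add_sub_cancel,
    sum_Ioc_succ_top (Nat.zero_le s), add_sub_cancel_left]

theorem cumulativeSum_sub_le_sum_Icc (hx : ∀ t, 0 ≤ x t) {t : ℕ} (htT : t ≤ T) (L : ℕ) :
    cumulativeSum T x t - cumulativeSum T x (t - L) ≤ ∑ i ∈ Icc (t + 1 - L) t, x i := by
  rw [cumulativeSum, cumulativeSum, min_eq_left htT, min_eq_left (by omega),
    ← sum_Ioc_consecutive x (Nat.zero_le _) (Nat.sub_le t L), add_sub_cancel_left]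
  exact sum_le_sum_of_subset_of_nonneg (fun i hi ↦ by simp at hi ⊢; omega) fun i _ _ ↦ hx i

end CumulativeSum

section Trajectory

variable {G T TU TD : ℕ} {u y z : ℕ → ℤ}

theorem eq_cumulativeSum_sub (hu0 : u 0 = 0)
    (hflow : ∀ t, 1 ≤ t → t ≤ T → u t - u (t - 1) = y t - z t) :
    ∀ t ≤ T, u t = cumulativeSum T y t - cumulativeSum T z t := by
  intro t
  induction t with
  | zero => simp [hu0]
  | succ t ih =>
    intro ht
    have := hflow (t + 1) (by omega) ht
    have := cumulativeSum_sub_pred (x := y) (Nat.le_add_left 1 t) ht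
    have := cumulativeSum_sub_pred (x := z) (Nat.le_add_left 1 t) ht
    simp only [Nat.add_sub_cancel] at *
    linarith [ih (by omega)]

theorem isCumulativeSchedule_cumulativeSum (hu0 : u 0 = 0)
    (hy : ∀ t, 0 ≤ y t) (hz : ∀ t, 0 ≤ z t)
    (hflow : ∀ t, 1 ≤ t → t ≤ T → u t - u (t - 1) = y t - z t)
    (hminup : ∀ t, 1 ≤ t → t ≤ T → ∑ i ∈ Icc (t + 1 - TU) t, y i ≤ u t)
    (hmindown : ∀ t, 1 ≤ t → t ≤ T → ∑ i ∈ Icc (t + 1 - TD) t, z i ≤ G - u t) :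
    IsCumulativeSchedule G TU TD (cumulativeSum T y) (cumulativeSum T z) where
  startups_zero := cumulativeSum_zero
  shutdowns_zero := cumulativeSum_zero
  monotone_startups := monotone_cumulativeSum hy
  monotone_shutdowns := monotone_cumulativeSum hz
  shutdowns_le_startups_sub t := by
    rw [← cumulativeSum_min t]
    refine le_trans ?_ (monotone_cumulativeSum hy (Nat.sub_le_sub_right (min_le_left t T) TU))
    obtain h0 | hpos := Nat.eq_zero_or_pos (min t T)
    · simp [h0]
    have := hminup _ hpos (min_le_right t T)
    have := cumulativeSum_sub_le_sum_Icc hy (min_le_right t T) TU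
    linarith [eq_cumulativeSum_sub hu0 hflow _ (min_le_right t T)]
  startups_le_shutdowns_sub_add t := by
    rw [← cumulativeSum_min t]
    refine le_trans ?_ (add_le_add_left
      (monotone_cumulativeSum hz (Nat.sub_le_sub_right (min_le_left t T) TD)) _)
    obtain h0 | hpos := Nat.eq_zero_or_pos (min t T)
    · simp [h0]
    have := hmindown _ hpos (min_le_right t T)
    have := cumulativeSum_sub_le_sum_Icc hz (min_le_right t T) TD
    linarith [eq_cumulativeSum_sub hu0 hflow _ (min_le_right t T)]

end Trajectory

theorem clustered_commitment_disaggregation_general (G T TU TD : ℕ)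
    (hTU : 1 ≤ TU) (hTD : 1 ≤ TD)
    (u y z : ℕ → ℤ)
    (hu0 : u 0 = 0)
    (hy : ∀ t, 0 ≤ y t) (hz : ∀ t, 0 ≤ z t)
    (hflow : ∀ t, 1 ≤ t → t ≤ T → u t - u (t - 1) = y t - z t)
    (hminup : ∀ t, 1 ≤ t → t ≤ T → ∑ i ∈ Finset.Icc (t + 1 - TU) t, y i ≤ u t)
    (hmindown : ∀ t, 1 ≤ t → t ≤ T → ∑ i ∈ Finset.Icc (t + 1 - TD) t, z i ≤ G - u t) :
    ∃ ut : Fin G → ℕ → ℤ,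
      (∀ g t, ut g t = 0 ∨ ut g t = 1) ∧
      (∀ g, ut g 0 = 0) ∧
      (∀ g t, 1 ≤ t → t ≤ T →
        ∑ i ∈ Finset.Icc (t + 1 - TU) t, max (ut g i - ut g (i - 1)) 0 ≤ ut g t) ∧
      (∀ g t, 1 ≤ t → t ≤ T →
        ∑ i ∈ Finset.Icc (t + 1 - TD) t, max (ut g (i - 1) - ut g i) 0 ≤ 1 - ut g t) ∧
      (∀ t, t ≤ T → u t = ∑ g, ut g t) ∧
      (∀ t, 1 ≤ t → t ≤ T → y t = ∑ g, max (ut g t - ut g (t - 1)) 0) ∧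
      (∀ t, 1 ≤ t → t ≤ T → z t = ∑ g, max (ut g (t - 1) - ut g t) 0) := by
  set Y := cumulativeSum T y
  set Z := cumulativeSum T z
  have hS : IsCumulativeSchedule G TU TD Y Z :=
    isCumulativeSchedule_cumulativeSum hu0 hy hz hflow hminup hmindown
  have hunit (g : Fin G) :
      IsCumulativeSchedule 1 TU TD (roundRobinShare G g ∘ Y) (roundRobinShare G g ∘ Z) :=
    hS.roundRobinShare g.isLt
  refine ⟨fun g t ↦ roundRobinShare G g (Y t) - roundRobinShare G g (Z t),
    fun g ↦ (hunit g).sub_eq_zero_or_one,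
    fun g ↦ sub_eq_zero.2 ((hunit g).startups_zero.trans (hunit g).shutdowns_zero.symm),
    fun g t _ _ ↦ (hunit g).sum_max_sub_pred_zero_le hTU hTD t,
    fun g t _ _ ↦ (hunit g).sum_max_pred_sub_zero_le hTU hTD t,
    fun t ht ↦ ?_, fun t ht₁ ht₂ ↦ ?_, fun t ht₁ ht₂ ↦ ?_⟩
  · rw [eq_cumulativeSum_sub hu0 hflow t ht,
      sum_roundRobinShare_sub (hS.shutdowns_le_startups t) (hS.startups_le_shutdowns_add t)]
  · rw [← cumulativeSum_sub_pred (x := y) ht₁ ht₂, ← sum_roundRobinShare_sub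
      (hS.monotone_startups (Nat.sub_le t 1)) (hS.startups_le_pred_add hTD t)]
    exact sum_congr rfl fun g _ ↦ (((hunit g).mono hTU hTD).max_sub_pred_zero t).symm
  · rw [← cumulativeSum_sub_pred (x := z) ht₁ ht₂, ← sum_roundRobinShare_sub
      (hS.monotone_shutdowns (Nat.sub_le t 1)) (hS.shutdowns_le_pred_add hTU t)]
    exact sum_congr rfl fun g _ ↦ (((hunit g).mono hTU hTD).max_pred_sub_zero t).symm

/-- Disaggregation of clustered commitment trajectories: any integer trajectory satisfying
the clustered logic (1) and minimum up/down-time constraints (2)–(3) with `u₀ = 0` decomposes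
into `G` individual 0–1 trajectories each satisfying the single-unit constraints, whose
startups, shutdowns and commitments sum to the clustered ones. -/
theorem clustered_commitment_disaggregation (G T TU TD : ℕ)
    (hTU : 1 ≤ TU) (hTD : 1 ≤ TD)
    (u y z : ℕ → ℤ)
    (hu0 : u 0 = 0)
    (hu : ∀ t, 0 ≤ u t ∧ u t ≤ G)
    (hy : ∀ t, 0 ≤ y t) (hz : ∀ t, 0 ≤ z t)
    (hflow : ∀ t, 1 ≤ t → t ≤ T → u t - u (t - 1) = y t - z t)
    (hminup : ∀ t, 1 ≤ t → t ≤ T → ∑ i ∈ Finset.Icc (t + 1 - TU) t, y i ≤ u t)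
    (hmindown : ∀ t, 1 ≤ t → t ≤ T → ∑ i ∈ Finset.Icc (t + 1 - TD) t, z i ≤ G - u t) :
    ∃ ut : Fin G → ℕ → ℤ,
      (∀ g t, ut g t = 0 ∨ ut g t = 1) ∧
      (∀ g, ut g 0 = 0) ∧
      (∀ g t, 1 ≤ t → t ≤ T →
        ∑ i ∈ Finset.Icc (t + 1 - TU) t, max (ut g i - ut g (i - 1)) 0 ≤ ut g t) ∧
      (∀ g t, 1 ≤ t → t ≤ T →
        ∑ i ∈ Finset.Icc (t + 1 - TD) t, max (ut g (i - 1) - ut g i) 0 ≤ 1 - ut g t) ∧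
      (∀ t, t ≤ T → u t = ∑ g, ut g t) ∧
      (∀ t, 1 ≤ t → t ≤ T → y t = ∑ g, max (ut g t - ut g (t - 1)) 0) ∧
      (∀ t, 1 ≤ t → t ≤ T → z t = ∑ g, max (ut g (t - 1) - ut g t) 0) :=
  clustered_commitment_disaggregation_general G T TU TD hTU hTD u y z hu0 hy hz hflow hminup
    hmindown
end

section
/- If P is the integral polytope defined by the ordering constraints 0 ≤ ũ_{G,t} ≤ ⋯ ≤ ũ_{1,t} ≤ 1, then the extended polytope Q obtained by adding nonnegative variables p̃_{g,t}, r̃⁺_{g,t}, r̃⁻_{g,t} with p̃_{g,t} + r̃⁺_{g,t} ≤ (P̄−P_)ũ_{g,t} and p̃_{g,t} ≥ r̃⁻_{g,t}, together with the defining equalities u_t = Σ_g ũ_{g,t}, p_t = Σ_g p̃_{g,t}, r⁺_t = Σ_g r̃⁺_{g,t}, r⁻_t = Σ_g r̃⁻_{g,t}, has all vertices with integral ũ-components; i.e., Q is the convex hull of its mixed-integer feasible points. -/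
/-- The extended polytope (11)–(19): ordered commitment variables in `[0,1]`, nonnegative
production/reserve variables with capacity constraints affine in `ũ`, and aggregate
defining equalities. Points are tuples `(ũ, p̃, r̃⁺, r̃⁻, u, p, r⁺, r⁻)`. -/
def extendedPolytope (G T : ℕ) (Pmax Pmin : ℝ) :
    Set ((Fin G → Fin T → ℝ) × (Fin G → Fin T → ℝ) × (Fin G → Fin T → ℝ) ×
      (Fin G → Fin T → ℝ) × (Fin T → ℝ) × (Fin T → ℝ) × (Fin T → ℝ) × (Fin T → ℝ)) :=
  {x | (∀ g t, x.1 g t ∈ Set.Icc (0 : ℝ) 1) ∧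
    (∀ (g : Fin G) (t : Fin T) (h : (g : ℕ) + 1 < G), x.1 ⟨(g : ℕ) + 1, h⟩ t ≤ x.1 g t) ∧
    (∀ g t, 0 ≤ x.2.1 g t ∧ 0 ≤ x.2.2.1 g t ∧ 0 ≤ x.2.2.2.1 g t) ∧
    (∀ g t, x.2.1 g t + x.2.2.1 g t ≤ (Pmax - Pmin) * x.1 g t) ∧
    (∀ g t, x.2.2.2.1 g t ≤ x.2.1 g t) ∧
    (∀ t, x.2.2.2.2.1 t = ∑ g, x.1 g t) ∧
    (∀ t, x.2.2.2.2.2.1 t = ∑ g, x.2.1 g t) ∧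
    (∀ t, x.2.2.2.2.2.2.1 t = ∑ g, x.2.2.1 g t) ∧
    (∀ t, x.2.2.2.2.2.2.2 t = ∑ g, x.2.2.2.1 g t)}

/-! By Krein–Milman (the polytope is compact and convex) it suffices to show that extreme points
have 0–1 commitments. Suppose `ũ g t = α ∈ (0,1)` at a point `x`. Multiply by `1 ± ε` every
block `(ũ, p̃, r̃⁺, r̃⁻)` at `(g', t)` with `ũ g' t = α`, and recompute the aggregates. The block
constraints are homogeneous, so they survive; the ordering and the bounds `0 ≤ ũ ≤ 1` survive
for small `ε` because the remaining values of column `t`, and `0`, `1`, stay at a positive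
distance from `α`. So `x` is the midpoint of two other points of the polytope. -/

/-- By Carathéodory, the hull is the union over `k ≤ finrank + 1` of the continuous images of
`stdSimplex ℝ (Fin k) × sᵏ` under `(w, z) ↦ ∑ wᵢ zᵢ`. -/
theorem isCompact_convexHull {E : Type*} [AddCommGroup E] [Module ℝ E] [TopologicalSpace E]
    [ContinuousAdd E] [ContinuousSMul ℝ E] [FiniteDimensional ℝ E] {s : Set E}
    (hs : IsCompact s) : IsCompact (convexHull ℝ s) := by
  let K (k : ℕ) : Set E := (fun p : (Fin k → ℝ) × (Fin k → E) => ∑ i, p.1 i • p.2 i) ''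
    (stdSimplex ℝ (Fin k) ×ˢ Set.univ.pi fun _ => s)
  have hK (k : ℕ) : IsCompact (K k) :=
    ((isCompact_stdSimplex ℝ (Fin k)).prod (isCompact_univ_pi fun _ => hs)).image (by fun_prop)
  suffices convexHull ℝ s = ⋃ k ∈ Finset.range (Module.finrank ℝ E + 2), K k by
    rw [this]; exact (Finset.range _).isCompact_biUnion fun k _ => hK k
  refine subset_antisymm (fun x hx => ?_) (Set.iUnion₂_subset fun k _ => ?_)
  · obtain ⟨ι, _, z, w, hzs, hz, hw, hw1, rfl⟩ := eq_pos_convex_span_of_mem_convexHull hx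
    have hcard : Fintype.card ι < Module.finrank ℝ E + 2 :=
      Nat.lt_succ_of_le (hz.card_le_finrank_succ.trans (by
        have := Submodule.finrank_le (vectorSpan ℝ (Set.range z)); omega))
    let e := (Fintype.equivFin ι).symm
    refine Set.mem_biUnion (Finset.mem_range.2 hcard) ⟨(w ∘ e, z ∘ e), ⟨⟨fun i => (hw _).le, ?_⟩,
      fun i _ => hzs ⟨_, rfl⟩⟩, ?_⟩
    · simpa only [Function.comp_apply, e.sum_comp] using hw1
    · simp only [Function.comp_apply]; exact e.sum_comp fun i => w i • z i
  · rintro _ ⟨⟨w, z⟩, ⟨hw, hz⟩, rfl⟩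
    exact (convex_convexHull ℝ s).sum_mem (fun i _ => hw.1 i) hw.2
      fun i _ => subset_convexHull ℝ s (hz i (Set.mem_univ i))

theorem Set.Finite.exists_pos_le_abs_sub {S : Set ℝ} (hS : S.Finite) (a : ℝ) :
    ∃ δ > 0, ∀ v ∈ S, v ≠ a → δ ≤ |v - a| := by
  obtain ⟨δ, hδ, hball⟩ := Metric.isOpen_iff.1 (hS.sdiff (t := {a})).isClosed.isOpen_compl a
    (by simp)
  refine ⟨δ, hδ, fun v hv hva => ?_⟩
  by_contra! h
  exact hball (by rwa [Metric.mem_ball, Real.dist_eq]) ⟨hv, hva⟩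

noncomputable def shiftAt (a η v : ℝ) : ℝ := if v = a then a + η else v

theorem monotoneOn_shiftAt {S : Set ℝ} {a δ η : ℝ} (hδ : ∀ v ∈ S, v ≠ a → δ ≤ |v - a|)
    (hη : |η| < δ) : MonotoneOn (shiftAt a η) S := by
  intro v hv w hw hvw
  unfold shiftAt
  split_ifs with hva hwa hwa
  · exact le_rfl
  · have := hδ w hw hwa
    rw [abs_of_nonneg (by linarith)] at this
    linarith [le_abs_self η]
  · have := hδ v hv hva
    rw [abs_of_nonpos (by linarith)] at this
    linarith [neg_abs_le η]
  · exact hvw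

abbrev ExtendedSpace (G T : ℕ) : Type :=
  (Fin G → Fin T → ℝ) × (Fin G → Fin T → ℝ) × (Fin G → Fin T → ℝ) ×
    (Fin G → Fin T → ℝ) × (Fin T → ℝ) × (Fin T → ℝ) × (Fin T → ℝ) × (Fin T → ℝ)

def commitmentPolytope (G T : ℕ) : Set (Fin G → Fin T → ℝ) :=
  {u | (∀ g t, u g t ∈ Set.Icc (0 : ℝ) 1) ∧
    ∀ (g : Fin G) (t : Fin T) (h : (g : ℕ) + 1 < G), u ⟨(g : ℕ) + 1, h⟩ t ≤ u g t}

noncomputable def levelMask {G T : ℕ} (u : Fin G → Fin T → ℝ) (g : Fin G) (t : Fin T) :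
    Fin G → Fin T → ℝ :=
  fun g' t' => if t' = t ∧ u g' t = u g t then 1 else 0

section

variable {G T : ℕ}

theorem one_add_smul_levelMask_mul (u : Fin G → Fin T → ℝ) (g : Fin G) (t : Fin T) (s : ℝ) :
    (1 + s • levelMask u g t) * u =
      fun g' t' => if t' = t then shiftAt (u g t) (s * u g t) (u g' t) else u g' t' := by
  ext g' t'
  by_cases ht : t' = t
  · subst ht
    simp only [levelMask, shiftAt, true_and, if_true, Pi.mul_apply, Pi.add_apply, Pi.smul_apply,
      Pi.one_apply, smul_eq_mul]
    split_ifs with h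
    · rw [h]; ring
    · ring
  · simp [levelMask, ht]

theorem one_add_smul_levelMask_nonneg (u : Fin G → Fin T → ℝ) (g : Fin G) (t : Fin T) {s : ℝ}
    (hs : |s| ≤ 1) : 0 ≤ 1 + s • levelMask u g t := fun g' t' => by
  simp only [levelMask, Pi.add_apply, Pi.smul_apply, Pi.one_apply, Pi.zero_apply, smul_eq_mul]
  split_ifs <;> linarith [neg_abs_le s]

theorem exists_one_add_smul_levelMask_mul_mem {u : Fin G → Fin T → ℝ}
    (hu : u ∈ commitmentPolytope G T) {g : Fin G} {t : Fin T} (h0 : u g t ≠ 0) (h1 : u g t ≠ 1) :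
    ∃ ε ∈ Set.Ioo (0 : ℝ) 1, ∀ s, |s| ≤ ε →
      (1 + s • levelMask u g t) * u ∈ commitmentPolytope G T := by
  set α := u g t
  have hα0 : 0 < α := lt_of_le_of_ne (hu.1 g t).1 (Ne.symm h0)
  have hα1 : α < 1 := lt_of_le_of_ne (hu.1 g t).2 h1
  set S : Set ℝ := {0, 1} ∪ Set.range fun g' => u g' t
  obtain ⟨δ, hδ, hsep⟩ := (Set.toFinite S).exists_pos_le_abs_sub α
  have hδα : δ ≤ α := by simpa [abs_of_pos hα0] using hsep 0 (by simp [S]) (Ne.symm h0)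
  refine ⟨δ / 2, ⟨by positivity, by linarith⟩, fun s hs => ?_⟩
  have hmono : MonotoneOn (shiftAt α (s * α)) S := monotoneOn_shiftAt hsep (by
    rw [abs_mul, abs_of_pos hα0]; nlinarith [abs_nonneg s])
  have hmem (g' : Fin G) : u g' t ∈ S := Or.inr ⟨g', rfl⟩
  rw [one_add_smul_levelMask_mul]
  refine ⟨fun g' t' => ?_, fun g' t' h => ?_⟩ <;> dsimp only <;> split_ifs
  · have hfix (v : ℝ) (hv : v ≠ α) : shiftAt α (s * α) v = v := if_neg hv
    refine ⟨?_, ?_⟩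
    · simpa [hfix 0 (Ne.symm h0)] using hmono (by simp [S]) (hmem g') (hu.1 g' t).1
    · simpa [hfix 1 (Ne.symm h1)] using hmono (hmem g') (by simp [S]) (hu.1 g' t).2
  · exact hu.1 g' t'
  · exact hmono (hmem _) (hmem g') (hu.2 g' t h)
  · exact hu.2 g' t' h

end

section

variable {G T : ℕ} {Pmax Pmin : ℝ}

theorem mem_commitmentPolytope_of_mem_extendedPolytope {x : ExtendedSpace G T}
    (hx : x ∈ extendedPolytope G T Pmax Pmin) : x.1 ∈ commitmentPolytope G T :=
  ⟨hx.1, hx.2.1⟩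

theorem convex_extendedPolytope : Convex ℝ (extendedPolytope G T Pmax Pmin) := by
  intro x hx y hy a b ha hb hab
  obtain ⟨h1, h2, h3, h4, h5, h6, h7, h8, h9⟩ := hx
  obtain ⟨k1, k2, k3, k4, k5, k6, k7, k8, k9⟩ := hy
  refine ⟨fun g t => ⟨?_, ?_⟩, fun g t h => ?_, fun g t => ⟨?_, ?_, ?_⟩, fun g t => ?_,
    fun g t => ?_, fun t => ?_, fun t => ?_, fun t => ?_, fun t => ?_⟩ <;>
    simp only [Prod.fst_add, Prod.snd_add, Prod.smul_fst, Prod.smul_snd, Pi.add_apply,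
      Pi.smul_apply, smul_eq_mul]
  · nlinarith [(h1 g t).1, (k1 g t).1]
  · nlinarith [(h1 g t).2, (k1 g t).2]
  · nlinarith [h2 g t h, k2 g t h]
  · nlinarith [(h3 g t).1, (k3 g t).1]
  · nlinarith [(h3 g t).2.1, (k3 g t).2.1]
  · nlinarith [(h3 g t).2.2, (k3 g t).2.2]
  · nlinarith [h4 g t, k4 g t]
  · nlinarith [h5 g t, k5 g t]
  · rw [h6, k6, Finset.mul_sum, Finset.mul_sum, ← Finset.sum_add_distrib]
  · rw [h7, k7, Finset.mul_sum, Finset.mul_sum, ← Finset.sum_add_distrib]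
  · rw [h8, k8, Finset.mul_sum, Finset.mul_sum, ← Finset.sum_add_distrib]
  · rw [h9, k9, Finset.mul_sum, Finset.mul_sum, ← Finset.sum_add_distrib]

theorem isClosed_extendedPolytope : IsClosed (extendedPolytope G T Pmax Pmin) := by
  simp only [extendedPolytope, Set.mem_Icc, Set.ofPred_and, Set.ofPred_forall]
  repeat' first
    | apply IsClosed.inter
    | apply isClosed_iInter; intro _
    | apply isClosed_le <;> fun_prop
    | apply isClosed_eq <;> fun_prop

theorem isCompact_extendedPolytope : IsCompact (extendedPolytope G T Pmax Pmin) := by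
  set B := 1 + |Pmax - Pmin|
  let top : ExtendedSpace G T := (fun _ _ => B, fun _ _ => B, fun _ _ => B, fun _ _ => B,
    fun _ => ∑ _g : Fin G, B, fun _ => ∑ _g : Fin G, B, fun _ => ∑ _g : Fin G, B,
    fun _ => ∑ _g : Fin G, B)
  refine (isCompact_Icc (a := 0) (b := top)).of_isClosed_subset isClosed_extendedPolytope ?_
  rintro x ⟨h1, -, h3, h4, h5, h6, h7, h8, h9⟩
  have hcap (g : Fin G) (t : Fin T) : (Pmax - Pmin) * x.1 g t ≤ B := by
    nlinarith [le_abs_self (Pmax - Pmin), abs_nonneg (Pmax - Pmin), (h1 g t).1, (h1 g t).2]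
  have hu (g t) : x.1 g t ≤ B := by linarith [(h1 g t).2, abs_nonneg (Pmax - Pmin)]
  have hp (g t) : x.2.1 g t ≤ B := by linarith [h4 g t, hcap g t, (h3 g t).2.1]
  have hr (g t) : x.2.2.1 g t ≤ B := by linarith [h4 g t, hcap g t, (h3 g t).1]
  have hr' (g t) : x.2.2.2.1 g t ≤ B := (h5 g t).trans (hp g t)
  simp only [Set.mem_Icc, Prod.le_def, Pi.le_def, h6, h7, h8, h9]
  exact ⟨⟨fun g t => (h1 g t).1, fun g t => (h3 g t).1, fun g t => (h3 g t).2.1,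
      fun g t => (h3 g t).2.2, fun t => Finset.sum_nonneg fun g _ => (h1 g t).1,
      fun t => Finset.sum_nonneg fun g _ => (h3 g t).1,
      fun t => Finset.sum_nonneg fun g _ => (h3 g t).2.1,
      fun t => Finset.sum_nonneg fun g _ => (h3 g t).2.2⟩,
    ⟨hu, hp, hr, hr', fun t => Finset.sum_le_sum fun g _ => hu g t,
      fun t => Finset.sum_le_sum fun g _ => hp g t, fun t => Finset.sum_le_sum fun g _ => hr g t,
      fun t => Finset.sum_le_sum fun g _ => hr' g t⟩⟩

def scaleBlocks (x : ExtendedSpace G T) : (Fin G → Fin T → ℝ) →ₗ[ℝ] ExtendedSpace G T where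
  toFun c := (c * x.1, c * x.2.1, c * x.2.2.1, c * x.2.2.2.1,
    fun t => ∑ g, c g t * x.1 g t, fun t => ∑ g, c g t * x.2.1 g t,
    fun t => ∑ g, c g t * x.2.2.1 g t, fun t => ∑ g, c g t * x.2.2.2.1 g t)
  map_add' c c' := by ext <;> simp [add_mul, Finset.sum_add_distrib]
  map_smul' a c := by ext <;> simp [mul_assoc, Finset.mul_sum]

theorem scaleBlocks_one {x : ExtendedSpace G T} (hx : x ∈ extendedPolytope G T Pmax Pmin) :
    scaleBlocks x 1 = x := by
  obtain ⟨-, -, -, -, -, h6, h7, h8, h9⟩ := hx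
  ext <;> simp [scaleBlocks, h6, h7, h8, h9]

theorem scaleBlocks_mem {x : ExtendedSpace G T} (hx : x ∈ extendedPolytope G T Pmax Pmin)
    {c : Fin G → Fin T → ℝ} (hc : 0 ≤ c) (hcu : c * x.1 ∈ commitmentPolytope G T) :
    scaleBlocks x c ∈ extendedPolytope G T Pmax Pmin := by
  obtain ⟨-, -, h3, h4, h5, -⟩ := hx
  refine ⟨hcu.1, hcu.2, fun g t => ⟨?_, ?_, ?_⟩, fun g t => ?_, fun g t => ?_,
    fun _ => rfl, fun _ => rfl, fun _ => rfl, fun _ => rfl⟩ <;>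
    simp only [scaleBlocks, LinearMap.coe_mk, AddHom.coe_mk, Pi.mul_apply]
  · exact mul_nonneg (hc g t) (h3 g t).1
  · exact mul_nonneg (hc g t) (h3 g t).2.1
  · exact mul_nonneg (hc g t) (h3 g t).2.2
  · nlinarith [mul_le_mul_of_nonneg_left (h4 g t) (hc g t)]
  · exact mul_le_mul_of_nonneg_left (h5 g t) (hc g t)

theorem binary_of_mem_extremePoints_extendedPolytope {x : ExtendedSpace G T}
    (hx : x ∈ (extendedPolytope G T Pmax Pmin).extremePoints ℝ) (g : Fin G) (t : Fin T) :
    x.1 g t = 0 ∨ x.1 g t = 1 := by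
  by_contra! hfrac
  obtain ⟨ε, ⟨hε0, hε1⟩, hscale⟩ := exists_one_add_smul_levelMask_mul_mem
    (mem_commitmentPolytope_of_mem_extendedPolytope hx.1) hfrac.1 hfrac.2
  set m := levelMask x.1 g t
  have hmem (s : ℝ) (hs : |s| ≤ ε) :
      scaleBlocks x (1 + s • m) ∈ extendedPolytope G T Pmax Pmin :=
    scaleBlocks_mem hx.1 (one_add_smul_levelMask_nonneg _ _ _ (hs.trans hε1.le)) (hscale s hs)
  have hseg : x ∈ openSegment ℝ (scaleBlocks x (1 + ε • m)) (scaleBlocks x (1 + (-ε) • m)) := by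
    refine ⟨1 / 2, 1 / 2, by norm_num, by norm_num, by norm_num, ?_⟩
    rw [← map_smul, ← map_smul, ← map_add]
    convert scaleBlocks_one hx.1 using 2
    module
  have hleft := congrFun (congrFun (congrArg Prod.fst
    (hx.2 (hmem ε (abs_of_pos hε0).le) (hmem (-ε) (by rw [abs_neg, abs_of_pos hε0])) hseg)) g) t
  simp only [scaleBlocks, LinearMap.coe_mk, AddHom.coe_mk, Pi.add_apply, Pi.one_apply,
    Pi.smul_apply, levelMask, smul_eq_mul, mul_ite, mul_one, mul_zero, Pi.mul_apply, and_self,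
    ↓reduceIte, m] at hleft
  have : ε * x.1 g t = 0 := by linarith
  exact hfrac.1 ((mul_eq_zero.1 this).resolve_left hε0.ne')

theorem isClosed_setOf_binary :
    IsClosed {x : ExtendedSpace G T | ∀ g t, x.1 g t = 0 ∨ x.1 g t = 1} := by
  simp only [Set.ofPred_forall]
  exact isClosed_iInter fun g => isClosed_iInter fun t =>
    (isClosed_eq (by fun_prop) continuous_const).union (isClosed_eq (by fun_prop) continuous_const)

end

theorem extendedPolytope_integral_general (G T : ℕ) (Pmax Pmin : ℝ) :
    (∀ x ∈ Set.extremePoints ℝ (extendedPolytope G T Pmax Pmin),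
      ∀ g t, x.1 g t = 0 ∨ x.1 g t = 1) ∧
    extendedPolytope G T Pmax Pmin =
      convexHull ℝ {x ∈ extendedPolytope G T Pmax Pmin | ∀ g t, x.1 g t = 0 ∨ x.1 g t = 1} := by
  set Q := extendedPolytope G T Pmax Pmin
  set M := {x ∈ Q | ∀ g t, x.1 g t = 0 ∨ x.1 g t = 1}
  have hext : Q.extremePoints ℝ ⊆ M := fun x hx =>
    ⟨hx.1, binary_of_mem_extremePoints_extendedPolytope hx⟩
  have hM : IsCompact M :=
    isCompact_extendedPolytope.of_isClosed_subset
      (isClosed_extendedPolytope.inter isClosed_setOf_binary) (Set.sep_subset _ _)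
  refine ⟨fun x hx => (hext hx).2, subset_antisymm ?_ (convexHull_min (Set.sep_subset _ _)
    convex_extendedPolytope)⟩
  calc Q = closure (convexHull ℝ (Q.extremePoints ℝ)) :=
        (closure_convexHull_extremePoints isCompact_extendedPolytope convex_extendedPolytope).symm
    _ ⊆ closure (convexHull ℝ M) := closure_mono (convexHull_mono hext)
    _ = convexHull ℝ M := (isCompact_convexHull hM).isClosed.closure_eq

/-- Every vertex (extreme point) of the extended polytope has 0–1 values in the `ũ`
coordinates, and the polytope is the convex hull of its mixed-integer feasible points. -/
theorem extendedPolytope_integral (G T : ℕ) (Pmax Pmin : ℝ)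
    (hPmin : 0 ≤ Pmin) (hP : Pmin < Pmax) :
    (∀ x ∈ Set.extremePoints ℝ (extendedPolytope G T Pmax Pmin),
      ∀ g t, x.1 g t = 0 ∨ x.1 g t = 1) ∧
    extendedPolytope G T Pmax Pmin =
      convexHull ℝ {x ∈ extendedPolytope G T Pmax Pmin | ∀ g t, x.1 g t = 0 ∨ x.1 g t = 1} :=
  extendedPolytope_integral_general G T Pmax Pmin
end

section
/- Feasible-region inclusion: the feasible set of the proposed clustered UC (constraints (1)–(6),(8),(11)–(24), projected onto the aggregate variables (u,p,r⁺,r⁻,y,z)) is contained in the feasible set of the classic clustered UC (constraints (1)–(10)); hence the optimal cost of the proposed CUC is greater than or equal to that of the classic CUC for any objective that is nondecreasing in cost. -/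
/-- Aggregate clustered-UC variable trajectories `(u, p, r⁺, r⁻, y, z)`. -/
abbrev CUCVars : Type := (ℕ → ℝ) × (ℕ → ℝ) × (ℕ → ℝ) × (ℕ → ℝ) × (ℕ → ℝ) × (ℕ → ℝ)

/-- Feasible set of the classic clustered UC, constraints (1)–(10). -/
def ClassicFeasible (G T TU TD : ℕ) (Pmax Pmin SU SD RU RD : ℝ) (x : CUCVars) : Prop :=
  let u := x.1; let p := x.2.1; let rp := x.2.2.1; let rm := x.2.2.2.1
  let y := x.2.2.2.2.1; let z := x.2.2.2.2.2
  (∀ t, t ≤ T → (∃ n : ℤ, u t = n) ∧ (∃ n : ℤ, y t = n) ∧ (∃ n : ℤ, z t = n)) ∧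
  (∀ t, t ≤ T →
    0 ≤ u t ∧ u t ≤ G ∧ 0 ≤ y t ∧ 0 ≤ z t ∧ 0 ≤ p t ∧ 0 ≤ rp t ∧ 0 ≤ rm t) ∧
  (∀ t, 1 ≤ t → t ≤ T → u t - u (t - 1) = y t - z t) ∧
  (∀ t, TU ≤ t → t ≤ T → ∑ i ∈ Finset.Icc (t + 1 - TU) t, y i ≤ u t) ∧
  (∀ t, TD ≤ t → t ≤ T → ∑ i ∈ Finset.Icc (t + 1 - TD) t, z i ≤ (G : ℝ) - u t) ∧
  (2 ≤ TU → ∀ t, 1 ≤ t → t + 1 ≤ T →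
    p t + rp t ≤ (Pmax - Pmin) * u t - (Pmax - SU) * y t - (Pmax - SD) * z (t + 1)) ∧
  (TU = 1 → ∀ t, 1 ≤ t → t + 1 ≤ T →
    p t + rp t ≤ (Pmax - Pmin) * u t - (Pmax - SD) * z (t + 1) - max (SD - SU) 0 * y t ∧
    p t + rp t ≤ (Pmax - Pmin) * u t - (Pmax - SU) * y t - max (SU - SD) 0 * z (t + 1)) ∧
  (∀ t, t ≤ T → 0 ≤ p t - rm t) ∧
  (∀ t, 1 ≤ t → t ≤ T → p t - p (t - 1) + rp t ≤ RU * u t) ∧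
  (∀ t, 1 ≤ t → t ≤ T → -(p t) + p (t - 1) + rm t ≤ RD * u (t - 1))

/-- Feasible set of the proposed clustered UC, constraints (1)–(6),(8),(11)–(24), projected
onto the aggregate variables. -/
def ProposedFeasible (G T TU TD : ℕ) (Pmax Pmin SU SD RU RD : ℝ) (x : CUCVars) : Prop :=
  let u := x.1; let p := x.2.1; let rp := x.2.2.1; let rm := x.2.2.2.1
  let y := x.2.2.2.2.1; let z := x.2.2.2.2.2
  (∀ t, t ≤ T → (∃ n : ℤ, u t = n) ∧ (∃ n : ℤ, y t = n) ∧ (∃ n : ℤ, z t = n)) ∧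
  (∀ t, t ≤ T →
    0 ≤ u t ∧ u t ≤ G ∧ 0 ≤ y t ∧ 0 ≤ z t ∧ 0 ≤ p t ∧ 0 ≤ rp t ∧ 0 ≤ rm t) ∧
  (∀ t, 1 ≤ t → t ≤ T → u t - u (t - 1) = y t - z t) ∧
  (∀ t, TU ≤ t → t ≤ T → ∑ i ∈ Finset.Icc (t + 1 - TU) t, y i ≤ u t) ∧
  (∀ t, TD ≤ t → t ≤ T → ∑ i ∈ Finset.Icc (t + 1 - TD) t, z i ≤ (G : ℝ) - u t) ∧
  (2 ≤ TU → ∀ t, 1 ≤ t → t + 1 ≤ T →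
    p t + rp t ≤ (Pmax - Pmin) * u t - (Pmax - SU) * y t - (Pmax - SD) * z (t + 1)) ∧
  (TU = 1 → ∀ t, 1 ≤ t → t + 1 ≤ T →
    p t + rp t ≤ (Pmax - Pmin) * u t - (Pmax - SD) * z (t + 1) - max (SD - SU) 0 * y t ∧
    p t + rp t ≤ (Pmax - Pmin) * u t - (Pmax - SU) * y t - max (SU - SD) 0 * z (t + 1)) ∧
  ∃ ut pt rpt rmt : Fin G → ℕ → ℝ,
    (∀ g t, t ≤ T → ut g t = 0 ∨ ut g t = 1) ∧
    (∀ (g : Fin G) (h : (g : ℕ) + 1 < G) (t : ℕ), t ≤ T →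
      ut ⟨(g : ℕ) + 1, h⟩ t ≤ ut g t) ∧
    (∀ g t, t ≤ T → 0 ≤ pt g t ∧ 0 ≤ rpt g t ∧ 0 ≤ rmt g t) ∧
    (∀ g t, t ≤ T → pt g t + rpt g t ≤ (Pmax - Pmin) * ut g t) ∧
    (∀ g t, t ≤ T → rmt g t ≤ pt g t) ∧
    (∀ t, t ≤ T → u t = ∑ g, ut g t) ∧
    (∀ t, t ≤ T → rp t = ∑ g, rpt g t) ∧
    (∀ t, t ≤ T → rm t = ∑ g, rmt g t) ∧
    (∀ t, t ≤ T → p t = ∑ g, pt g t) ∧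
    (2 ≤ TU → ∀ g t, 1 ≤ t → t ≤ T →
      pt g t + rpt g t ≤ (SU - Pmin) * ut g t + (Pmax - SU) * ut g (t - 1)) ∧
    (2 ≤ TU → ∀ g t, 1 ≤ t → t + 1 ≤ T →
      pt g t + rpt g t ≤ (SD - Pmin) * ut g t + (Pmax - SD) * ut g (t + 1)) ∧
    (TU = 1 → ∀ g t, 1 ≤ t → t + 1 ≤ T →
      pt g t + rpt g t ≤ (SU - Pmax + SD - Pmin) * ut g t
        + (Pmax - SU) * ut g (t - 1) + (Pmax - SD) * ut g (t + 1)) ∧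
    (∀ g t, 1 ≤ t → t ≤ T → pt g t - pt g (t - 1) + rpt g t ≤ RU * ut g t) ∧
    (∀ g t, 1 ≤ t → t ≤ T → -(pt g t) + pt g (t - 1) + rmt g t ≤ RD * ut g (t - 1))

/-! The classic constraints missing from the proposed formulation, minimum output (8) and the
aggregate ramp limits (9)–(10), are sums over the units of the individual-unit constraints
(15), (23), (24), through the aggregation identities (16)–(19). Minimizing over the smaller
feasible set can then only raise the infimum. -/

theorem sum_sub_sum_add_sum_le_mul_sum {ι R : Type*} [Ring R] [PartialOrder R]
    [IsOrderedAddMonoid R] (s : Finset ι) {a b c d : ι → R} (k : R)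
    (h : ∀ i ∈ s, a i - b i + c i ≤ k * d i) :
    ∑ i ∈ s, a i - ∑ i ∈ s, b i + ∑ i ∈ s, c i ≤ k * ∑ i ∈ s, d i := by
  rw [← Finset.sum_sub_distrib, ← Finset.sum_add_distrib, Finset.mul_sum]
  exact Finset.sum_le_sum h

theorem ProposedFeasible.classicFeasible {G T TU TD : ℕ} {Pmax Pmin SU SD RU RD : ℝ}
    {x : CUCVars} (hx : ProposedFeasible G T TU TD Pmax Pmin SU SD RU RD x) :
    ClassicFeasible G T TU TD Pmax Pmin SU SD RU RD x := by
  obtain ⟨hint, hbnd, hlog, hup, hdown, hcap, hcap₁, ut, pt, rpt, rmt, -, -, -, -, hrm_le,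
    hu, hrp, hrm, hp, -, -, -, hramp_up, hramp_down⟩ := hx
  refine ⟨hint, hbnd, hlog, hup, hdown, hcap, hcap₁, fun t ht => ?_, fun t ht₁ ht => ?_,
    fun t ht₁ ht => ?_⟩
  · rw [hp t ht, hrm t ht, sub_nonneg]
    exact Finset.sum_le_sum fun g _ => hrm_le g t ht
  · have ht' : t - 1 ≤ T := (Nat.sub_le t 1).trans ht
    rw [hp t ht, hp (t - 1) ht', hrp t ht, hu t ht]
    exact sum_sub_sum_add_sum_le_mul_sum _ RU fun g _ => hramp_up g t ht₁ ht
  · have ht' : t - 1 ≤ T := (Nat.sub_le t 1).trans ht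
    rw [hp t ht, hp (t - 1) ht', hrm t ht, hu (t - 1) ht', neg_add_eq_sub]
    exact sum_sub_sum_add_sum_le_mul_sum _ RD fun g _ => by
      simpa only [neg_add_eq_sub] using hramp_down g t ht₁ ht

theorem proposed_subset_classic_general (G T TU TD : ℕ) (Pmax Pmin SU SD RU RD : ℝ) :
    {x : CUCVars | ProposedFeasible G T TU TD Pmax Pmin SU SD RU RD x} ⊆
      {x : CUCVars | ClassicFeasible G T TU TD Pmax Pmin SU SD RU RD x} ∧
    ∀ cost : CUCVars → ℝ,
      {x : CUCVars | ProposedFeasible G T TU TD Pmax Pmin SU SD RU RD x}.Nonempty →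
      BddBelow (cost '' {x | ClassicFeasible G T TU TD Pmax Pmin SU SD RU RD x}) →
      sInf (cost '' {x | ClassicFeasible G T TU TD Pmax Pmin SU SD RU RD x}) ≤
        sInf (cost '' {x | ProposedFeasible G T TU TD Pmax Pmin SU SD RU RD x}) := by
  have hsub : {x : CUCVars | ProposedFeasible G T TU TD Pmax Pmin SU SD RU RD x} ⊆
      {x : CUCVars | ClassicFeasible G T TU TD Pmax Pmin SU SD RU RD x} :=
    fun _ => ProposedFeasible.classicFeasible
  exact ⟨hsub, fun cost hne hbdd => csInf_le_csInf hbdd (hne.image cost) (Set.image_mono hsub)⟩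

/-- The proposed CUC feasible set is contained in the classic CUC feasible set, hence for
any cost to be minimized the optimal cost of the proposed CUC is at least that of the
classic CUC. -/
theorem proposed_subset_classic (G T TU TD : ℕ) (Pmax Pmin SU SD RU RD : ℝ)
    (hPmin : 0 ≤ Pmin) (hSU : Pmin ≤ SU) (hSU' : SU ≤ Pmax)
    (hSD : Pmin ≤ SD) (hSD' : SD ≤ Pmax) (hRU : 0 < RU) (hRD : 0 < RD)
    (hTU : 1 ≤ TU) (hTD : 1 ≤ TD) :
    {x : CUCVars | ProposedFeasible G T TU TD Pmax Pmin SU SD RU RD x} ⊆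
      {x : CUCVars | ClassicFeasible G T TU TD Pmax Pmin SU SD RU RD x} ∧
    ∀ cost : CUCVars → ℝ,
      {x : CUCVars | ProposedFeasible G T TU TD Pmax Pmin SU SD RU RD x}.Nonempty →
      BddBelow (cost '' {x | ClassicFeasible G T TU TD Pmax Pmin SU SD RU RD x}) →
      sInf (cost '' {x | ClassicFeasible G T TU TD Pmax Pmin SU SD RU RD x}) ≤
        sInf (cost '' {x | ProposedFeasible G T TU TD Pmax Pmin SU SD RU RD x}) :=
  proposed_subset_classic_general G T TU TD Pmax Pmin SU SD RU RD
end
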